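/- arXiv:1806.02946 — 5 statements merged into one kernel-verified Lean document; each statement's English description precedes it below -/
import Mathlib

section
/- Let d ≥ 2 be an integer and A, B ∈ ℚ[X] nonzero coprime polynomials. Let p₀, q₀ ∈ ℚ[X] be coprime nonzero polynomials and define recursively g_n(X) = gcd(A(X)·p_n(X^d), B(X)·q_n(X^d)), p_{n+1}(X) = A(X)·p_n(X^d)/g_n(X), q_{n+1}(X) = B(X)·q_n(X^d)/g_n(X). Then the sequence of degrees (deg g_n)_{n≥0} is eventually periodic. -/
/-!
Count everything by root multiplicities over `ℂ`. Put `z n β = ord_β p n - ord_β q n` and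
`c β = ord_β A - ord_β B`. Cancelling `g n` gives `z (n + 1) β = z n (β ^ d) + c β` for `β ≠ 0`
and `z (n + 1) 0 = d * z n 0 + c 0`. Since `p n`, `q n` are coprime and `A`, `B` are coprime,
`ord_β g n` is a bounded function of `z (n + 1) β`, monotone or antitone.

At `0` the sequence `z n 0` is monotone. For `β ≠ 0` the orbit `β ^ d ^ k` either becomes
periodic, and then `z (n + P) β = z n β + Δ` for large `n`, or it is injective and eventually
leaves the finitely many roots of `A B p₀ q₀`, and then `z n β` is eventually constant. Either
way `ord_β g (n + P) ≤ ord_β g n` for all large `n` (or always `≥`), and a bounded sequence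
in `ℕ` with that property is eventually `P`-periodic, because its window sums of length `P`
are monotone and hence eventually constant. Finally `deg g n` is the sum of `ord_β g n` over
the roots of `A B`.
-/

open Polynomial Filter

def EventuallyPeriodic {α : Type*} (f : ℕ → α) : Prop :=
  ∃ n₀ P : ℕ, 0 < P ∧ ∀ n ≥ n₀, f (n + P) = f n

namespace EventuallyPeriodic

variable {α : Type*} {f g : ℕ → α}

lemma const (a : α) : EventuallyPeriodic fun _ : ℕ => a :=
  ⟨0, 1, one_pos, fun _ _ => rfl⟩

lemma add_mul_period {n₀ P : ℕ} (h : ∀ n ≥ n₀, f (n + P) = f n) (k : ℕ) :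
    ∀ n ≥ n₀, f (n + k * P) = f n := by
  induction k with
  | zero => simp
  | succ k ih =>
    intro n hn
    rw [add_mul, one_mul, ← add_assoc, h _ (by omega), ih n hn]

lemma add [Add α] (hf : EventuallyPeriodic f) (hg : EventuallyPeriodic g) :
    EventuallyPeriodic (f + g) := by
  obtain ⟨m, P, hP, hf⟩ := hf
  obtain ⟨m', P', hP', hg⟩ := hg
  refine ⟨max m m', P' * P, Nat.mul_pos hP' hP, fun n hn => ?_⟩
  simp only [Pi.add_apply]
  rw [add_mul_period hf P' n (le_of_max_le_left hn), mul_comm,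
    add_mul_period hg P n (le_of_max_le_right hn)]

lemma finset_sum {ι M : Type*} [AddCommMonoid M] (s : Finset ι) {F : ι → ℕ → M}
    (h : ∀ i ∈ s, EventuallyPeriodic (F i)) :
    EventuallyPeriodic fun n => ∑ i ∈ s, F i n := by
  simp only [← Finset.sum_apply]
  exact Finset.sum_induction F EventuallyPeriodic (fun _ _ => add) (const 0) h

end EventuallyPeriodic

lemma eventuallyPeriodic_of_shift_antitone {F : ℕ → ℕ} {K P : ℕ} (hP : 0 < P)
    (h : ∀ n ≥ K, F (n + P) ≤ F n) : EventuallyPeriodic F := by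
  -- the window sums `S n` decrease past `K`, so they stabilise, which forces `F (n + P) = F n`
  set S : ℕ → ℕ := fun n => ∑ i ∈ Finset.range P, F (n + i)
  have slide : ∀ n, S (n + 1) + F n = S n + F (n + P) := fun n => by
    simp only [S, ← Finset.sum_range_succ (fun i => F (n + i)),
      Finset.sum_range_succ' (fun i => F (n + i))]
    simp only [add_assoc, add_comm 1, add_zero]
  have hS : Antitone fun k => S (K + k) :=
    antitone_nat_of_succ_le fun k => by
      have := slide (K + k); have := h (K + k) (by omega); simp only [← add_assoc]; omega
  obtain ⟨k₀, hk₀⟩ := WellFoundedLT.antitone_chain_condition hS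
  refine ⟨K + k₀, P, hP, fun n hn => ?_⟩
  have h₁ := hk₀ (n - K) (by omega)
  have h₂ := hk₀ (n + 1 - K) (by omega)
  have := slide n
  simp only [show K + (n - K) = n by omega, show K + (n + 1 - K) = n + 1 by omega] at h₁ h₂
  omega

lemma eventuallyPeriodic_of_shift_monotone {F : ℕ → ℕ} {C K P : ℕ} (hP : 0 < P)
    (hC : ∀ n, F n ≤ C) (h : (∀ n ≥ K, F n ≤ F (n + P)) ∨ ∀ n ≥ K, F (n + P) ≤ F n) :
    EventuallyPeriodic F := by
  rcases h with h | h
  · obtain ⟨n₀, P', hP', hper⟩ :=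
      eventuallyPeriodic_of_shift_antitone (F := fun n => C - F n) hP fun n hn => by
        have := h n hn; omega
    refine ⟨n₀, P', hP', fun n hn => ?_⟩
    have := hper n hn
    have := hC n
    have := hC (n + P')
    dsimp only at *
    omega
  · exact eventuallyPeriodic_of_shift_antitone hP h

def EventuallyShiftMonotone (u : ℕ → ℤ) : Prop :=
  ∃ K P : ℕ, 0 < P ∧ ((∀ n ≥ K, u n ≤ u (n + P)) ∨ ∀ n ≥ K, u (n + P) ≤ u n)

namespace EventuallyShiftMonotone

variable {u : ℕ → ℤ}

lemma of_monotone_or_antitone (h : Monotone u ∨ Antitone u) : EventuallyShiftMonotone u :=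
  ⟨0, 1, one_pos, h.imp (fun h n _ => h n.le_succ) (fun h n _ => h n.le_succ)⟩

lemma of_add_period_eq_add {K P : ℕ} {Δ : ℤ} (hP : 0 < P)
    (h : ∀ n ≥ K, u (n + P) = u n + Δ) : EventuallyShiftMonotone u := by
  refine ⟨K, P, hP, ?_⟩
  rcases le_total 0 Δ with hΔ | hΔ
  · exact Or.inl fun n hn => by rw [h n hn]; omega
  · exact Or.inr fun n hn => by rw [h n hn]; omega

lemma comp_succ (h : EventuallyShiftMonotone u) :
    EventuallyShiftMonotone fun n => u (n + 1) := by
  obtain ⟨K, P, hP, h⟩ := h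
  refine ⟨K, P, hP, h.imp (fun h n hn => ?_) (fun h n hn => ?_)⟩ <;>
    simpa only [add_right_comm] using h (n + 1) (by omega)

lemma eventuallyPeriodic (hu : EventuallyShiftMonotone u) {F : ℕ → ℕ} {C : ℕ}
    (hC : ∀ n, F n ≤ C)
    (hF : (∀ n m, u n ≤ u m → F n ≤ F m) ∨ ∀ n m, u n ≤ u m → F m ≤ F n) :
    EventuallyPeriodic F := by
  obtain ⟨K, P, hP, hu⟩ := hu
  refine eventuallyPeriodic_of_shift_monotone hP hC (K := K) ?_
  rcases hu with hu | hu <;> rcases hF with hF | hF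
  exacts [Or.inl fun n hn => hF _ _ (hu n hn), Or.inr fun n hn => hF _ _ (hu n hn),
    Or.inr fun n hn => hF _ _ (hu n hn), Or.inl fun n hn => hF _ _ (hu n hn)]

end EventuallyShiftMonotone

lemma sum_range_add_eq_of_eventually_periodic {M : Type*} [AddCommGroup M] {v : ℕ → M}
    {i P : ℕ} (h : ∀ n ≥ i, v (n + P) = v n) :
    ∀ n ≥ i, ∑ k ∈ Finset.range P, v (n + k) = ∑ k ∈ Finset.range P, v (i + k) := by
  intro n hn
  induction n, hn using Nat.le_induction with
  | base => rfl
  | succ n hn ih =>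
    have h₁ := Finset.sum_range_succ (fun k => v (n + k)) P
    rw [Finset.sum_range_succ', h n hn] at h₁
    simp only [add_zero, ← add_assoc, add_right_comm n _ 1] at h₁
    rw [← ih]
    exact add_right_cancel h₁

section Orbit

variable {α M : Type*} [AddCommGroup M] {T : α → α} {S : Set α} {c : α → M}
  {z : ℕ → α → M}

lemma eq_iterate_add_sum (hS : Set.MapsTo T S S)
    (hz : ∀ n, ∀ x ∈ S, z (n + 1) x = z n (T x) + c x) (n : ℕ) :
    ∀ x ∈ S, z n x = z 0 (T^[n] x) + ∑ k ∈ Finset.range n, c (T^[k] x) := by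
  induction n with
  | zero => simp
  | succ n ih =>
    intro x hx
    rw [hz n x hx, ih (T x) (hS hx), Finset.sum_range_succ', Function.iterate_succ_apply]
    simp only [Function.iterate_succ_apply, Function.iterate_zero_apply, add_assoc]

lemma apply_add_eq_apply_add_sum (hS : Set.MapsTo T S S)
    (hz : ∀ n, ∀ x ∈ S, z (n + 1) x = z n (T x) + c x) {x : α} (hx : x ∈ S) (n P : ℕ) :
    z (n + P) x = z n x + (z 0 (T^[n + P] x) - z 0 (T^[n] x)) +
      ∑ k ∈ Finset.range P, c (T^[n + k] x) := by
  rw [eq_iterate_add_sum hS hz _ x hx, eq_iterate_add_sum hS hz _ x hx, Finset.sum_range_add]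
  abel

lemma exists_add_period_eq_add (hS : Set.MapsTo T S S)
    (hz : ∀ n, ∀ x ∈ S, z (n + 1) x = z n (T x) + c x)
    (hc : (Function.support c).Finite) (hz₀ : (Function.support (z 0)).Finite)
    {x : α} (hx : x ∈ S) :
    ∃ K P : ℕ, 0 < P ∧ ∃ Δ : M, ∀ n ≥ K, z (n + P) x = z n x + Δ := by
  by_cases hinj : Function.Injective fun k => T^[k] x
  · -- an injective orbit eventually avoids the finite supports of `c` and `z 0`
    have hev : ∀ᶠ k in atTop, T^[k] x ∉ Function.support c ∪ Function.support (z 0) := by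
      rw [← Nat.cofinite_eq_atTop]
      exact hinj.tendsto_cofinite.eventually (hc.union hz₀).eventually_cofinite_notMem
    obtain ⟨K, hK⟩ := eventually_atTop.1 hev
    refine ⟨K, 1, one_pos, 0, fun n hn => ?_⟩
    have h₁ := hK n hn
    have h₂ := hK (n + 1) (by omega)
    simp only [Set.mem_union, Function.mem_support, not_or, not_not] at h₁ h₂
    rw [apply_add_eq_apply_add_sum hS hz hx, Finset.sum_range_one, add_zero, h₁.1, h₁.2, h₂.2]
    simp
  · obtain ⟨a, b, hab, hne⟩ := Function.not_injective_iff.1 hinj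
    wlog hlt : a < b generalizing a b
    · exact this b a hab.symm hne.symm (by omega)
    have hper : ∀ n ≥ a, T^[n + (b - a)] x = T^[n] x := fun n hn => by
      rw [show n + (b - a) = (n - a) + b by omega, Function.iterate_add_apply, ← hab,
        ← Function.iterate_add_apply, show n - a + a = n by omega]
    refine ⟨a, b - a, by omega, ∑ k ∈ Finset.range (b - a), c (T^[a + k] x), fun n hn => ?_⟩
    rw [apply_add_eq_apply_add_sum hS hz hx, hper n hn, sub_self, add_zero,
      sum_range_add_eq_of_eventually_periodic (v := fun k => c (T^[k] x)) (fun m hm => by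
        simp only [hper m hm]) n hn]

end Orbit

lemma monotone_or_antitone_of_eq_mul_add {u : ℕ → ℤ} {a c : ℤ} (ha : 0 ≤ a)
    (h : ∀ n, u (n + 1) = a * u n + c) : Monotone u ∨ Antitone u := by
  have hdiff : ∀ n, u (n + 1) - u n = a ^ n * (u 1 - u 0) := by
    intro n
    induction n with
    | zero => simp
    | succ n ih => linear_combination h (n + 1) - h n + a * ih
  rcases le_total (u 0) (u 1) with h01 | h10
  · refine Or.inl (monotone_nat_of_le_succ fun n => ?_)
    have := mul_nonneg (pow_nonneg ha n) (sub_nonneg.2 h01)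
    linarith [hdiff n]
  · refine Or.inr (antitone_nat_of_succ_le fun n => ?_)
    have := mul_nonpos_of_nonneg_of_nonpos (pow_nonneg ha n) (sub_nonpos.2 h10)
    linarith [hdiff n]

lemma Polynomial.rootMultiplicity_pow {R : Type*} [CommRing R] [IsDomain R] (f : R[X]) (r : R)
    (m : ℕ) : (f ^ m).rootMultiplicity r = m * f.rootMultiplicity r := by
  classical
  rw [← count_roots, ← count_roots, roots_pow, Multiset.count_nsmul]

lemma Polynomial.rootMultiplicity_expand_eq_mul {R : Type*} [CommRing R] [IsDomain R] {d : ℕ}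
    (hd : 0 < d) (f : R[X]) (r : R) :
    (expand R d f).rootMultiplicity r =
      f.rootMultiplicity (r ^ d) * (X ^ d - C (r ^ d)).rootMultiplicity r := by
  obtain rfl | hf := eq_or_ne f 0
  · simp
  obtain ⟨g, hfg, hg⟩ := f.exists_eq_pow_rootMultiplicity_mul_and_not_dvd hf (r ^ d)
  have hg' : ¬ (expand R d g).IsRoot r := by
    rw [dvd_iff_isRoot, IsRoot, ← eval_X (x := r), ← eval_pow, ← eval_comp,
      ← expand_eq_comp_X_pow] at hg
    exact hg
  have hne : expand R d f ≠ 0 := (expand_ne_zero hd).2 hf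
  conv_lhs => rw [hfg]
  rw [hfg, map_mul, map_pow, map_sub, expand_X, expand_C] at hne
  rw [map_mul, map_pow, map_sub, expand_X, expand_C, rootMultiplicity_mul hne,
    rootMultiplicity_pow, rootMultiplicity_eq_zero hg', add_zero, mul_comm]

lemma Polynomial.rootMultiplicity_X_pow_sub_C_zero {R : Type*} [CommRing R] [IsDomain R]
    {d : ℕ} (hd : 0 < d) : (X ^ d - C ((0 : R) ^ d)).rootMultiplicity 0 = d := by
  simpa [zero_pow hd.ne'] using rootMultiplicity_X_sub_C_pow (0 : R) d

lemma Polynomial.rootMultiplicity_X_pow_sub_C_pow {F : Type*} [Field F] {d : ℕ}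
    (hd : (d : F) ≠ 0) {r : F} (hr : r ≠ 0) : (X ^ d - C (r ^ d)).rootMultiplicity r = 1 := by
  have hd0 : d ≠ 0 := by rintro rfl; simp at hd
  have hne : (X ^ d - C (r ^ d) : F[X]) ≠ 0 := X_pow_sub_C_ne_zero (Nat.pos_of_ne_zero hd0) _
  refine le_antisymm
    (rootMultiplicity_le_one_of_separable (separable_X_pow_sub_C _ hd (pow_ne_zero d hr)) r) ?_
  rw [Nat.one_le_iff_ne_zero, ← Nat.pos_iff_ne_zero, rootMultiplicity_pos hne]
  simp

namespace EuclideanDomain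

variable {R : Type*} [EuclideanDomain R] [DecidableEq R] {a b : R}

lemma gcd_ne_zero_of_left (ha : a ≠ 0) : gcd a b ≠ 0 := fun h =>
  ha (EuclideanDomain.gcd_eq_zero_iff.1 h).1

lemma left_div_gcd_ne_zero (ha : a ≠ 0) : a / gcd a b ≠ 0 := fun h =>
  ha (by rw [← EuclideanDomain.mul_div_cancel' (gcd_ne_zero_of_left ha) (gcd_dvd_left a b), h,
    mul_zero])

lemma right_div_gcd_ne_zero (ha : a ≠ 0) (hb : b ≠ 0) : b / gcd a b ≠ 0 := fun h =>
  hb (by rw [← EuclideanDomain.mul_div_cancel' (gcd_ne_zero_of_left ha) (gcd_dvd_right a b), h,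
    mul_zero])

lemma isCoprime_div_gcd_div_gcd (ha : a ≠ 0) : IsCoprime (a / gcd a b) (b / gcd a b) := by
  have hg := gcd_ne_zero_of_left (b := b) ha
  refine ⟨gcdA a b, gcdB a b, mul_left_cancel₀ hg ?_⟩
  calc gcd a b * (gcdA a b * (a / gcd a b) + gcdB a b * (b / gcd a b))
      = a * gcdA a b + b * gcdB a b := by
        rw [mul_add, mul_left_comm, EuclideanDomain.mul_div_cancel' hg (gcd_dvd_left a b),
          mul_left_comm, EuclideanDomain.mul_div_cancel' hg (gcd_dvd_right a b), mul_comm a,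
          mul_comm b]
    _ = gcd a b * 1 := by rw [mul_one, gcd_eq_gcd_ab]

end EuclideanDomain

noncomputable def rootMult (β : ℂ) (f : ℚ[X]) : ℕ :=
  (f.map (algebraMap ℚ ℂ)).rootMultiplicity β

section rootMult

variable {f g : ℚ[X]} {β : ℂ}

lemma map_algebraMap_ne_zero (hf : f ≠ 0) : f.map (algebraMap ℚ ℂ) ≠ 0 :=
  (Polynomial.map_ne_zero_iff (algebraMap ℚ ℂ).injective).2 hf

lemma rootMult_mul (hf : f ≠ 0) (hg : g ≠ 0) :
    rootMult β (f * g) = rootMult β f + rootMult β g := by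
  rw [rootMult, Polynomial.map_mul,
    rootMultiplicity_mul (mul_ne_zero (map_algebraMap_ne_zero hf) (map_algebraMap_ne_zero hg))]
  rfl

lemma rootMult_le_of_dvd (h : f ∣ g) (hg : g ≠ 0) : rootMult β f ≤ rootMult β g :=
  rootMultiplicity_le_rootMultiplicity_of_dvd (map_algebraMap_ne_zero hg)
    (Polynomial.map_dvd _ h) β

lemma rootMult_gcd (hf : f ≠ 0) (hg : g ≠ 0) :
    rootMult β (EuclideanDomain.gcd f g) = min (rootMult β f) (rootMult β g) := by
  have hgcd := EuclideanDomain.gcd_ne_zero_of_left (b := g) hf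
  refine le_antisymm (le_min (rootMult_le_of_dvd (EuclideanDomain.gcd_dvd_left f g) hf)
    (rootMult_le_of_dvd (EuclideanDomain.gcd_dvd_right f g) hg)) ?_
  -- `(X - β) ^ min` divides both `f` and `g`, hence their Bézout combination `gcd f g`
  unfold rootMult
  rw [le_rootMultiplicity_iff (map_algebraMap_ne_zero hgcd), EuclideanDomain.gcd_eq_gcd_ab,
    Polynomial.map_add, Polynomial.map_mul, Polynomial.map_mul]
  exact dvd_add
    (((pow_dvd_pow _ (min_le_left _ _)).trans (pow_rootMultiplicity_dvd _ _)).mul_right _)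
    (((pow_dvd_pow _ (min_le_right _ _)).trans (pow_rootMultiplicity_dvd _ _)).mul_right _)

lemma rootMult_eq_zero_or_eq_zero_of_isCoprime (h : IsCoprime f g) :
    rootMult β f = 0 ∨ rootMult β g = 0 := by
  by_contra! hfg
  have dvd_of_ne_zero {h : ℚ[X]} (hh : rootMult β h ≠ 0) :
      X - C β ∣ h.map (algebraMap ℚ ℂ) :=
    dvd_iff_isRoot.2 (rootMultiplicity_pos'.1 (Nat.pos_of_ne_zero hh)).2
  exact not_isUnit_X_sub_C β ((h.map (mapRingHom (algebraMap ℚ ℂ))).isUnit_of_dvd'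
    (dvd_of_ne_zero hfg.1) (dvd_of_ne_zero hfg.2))

lemma map_comp_X_pow (f : ℚ[X]) (d : ℕ) :
    (f.comp (X ^ d)).map (algebraMap ℚ ℂ) = expand ℂ d (f.map (algebraMap ℚ ℂ)) := by
  rw [Polynomial.map_comp, Polynomial.map_pow, map_X, expand_eq_comp_X_pow]

lemma rootMult_comp_X_pow {d : ℕ} (hd : 0 < d) (hβ : β ≠ 0) (f : ℚ[X]) :
    rootMult β (f.comp (X ^ d)) = rootMult (β ^ d) f := by
  rw [rootMult, map_comp_X_pow, rootMultiplicity_expand_eq_mul hd,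
    rootMultiplicity_X_pow_sub_C_pow (by exact_mod_cast hd.ne') hβ, mul_one, rootMult]

lemma rootMult_zero_comp_X_pow {d : ℕ} (hd : 0 < d) (f : ℚ[X]) :
    rootMult 0 (f.comp (X ^ d)) = d * rootMult 0 f := by
  rw [rootMult, map_comp_X_pow, rootMultiplicity_expand_eq_mul hd,
    rootMultiplicity_X_pow_sub_C_zero hd, zero_pow hd.ne', mul_comm, rootMult]

lemma rootMult_ne_zero_iff : rootMult β f ≠ 0 ↔ β ∈ f.aroots ℂ := by
  classical
  rw [rootMult, ← count_roots, Multiset.count_ne_zero, aroots]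

lemma finite_support_rootMult (f : ℚ[X]) : (Function.support fun β => rootMult β f).Finite :=
  (f.aroots ℂ).toFinset.finite_toSet.subset fun β hβ => by
    simpa using rootMult_ne_zero_iff.1 hβ

lemma natDegree_eq_sum_rootMult {R : Finset ℂ} (hR : ∀ β, rootMult β f ≠ 0 → β ∈ R) :
    f.natDegree = ∑ β ∈ R, rootMult β f := by
  classical
  rw [← IsAlgClosed.card_roots_map_eq_natDegree_of_injective f (algebraMap ℚ ℂ).injective,
    ← Multiset.sum_count_eq_card fun β hβ => hR β (rootMult_ne_zero_iff.2 hβ)]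
  simp only [count_roots, rootMult]

end rootMult

noncomputable def rootMultDiff (f g : ℚ[X]) (β : ℂ) : ℤ := rootMult β f - rootMult β g

lemma finite_support_rootMultDiff (f g : ℚ[X]) : (Function.support (rootMultDiff f g)).Finite :=
  ((finite_support_rootMult f).union (finite_support_rootMult g)).subset fun β hβ => by
    by_contra h
    simp_all [rootMultDiff]

lemma rootMultDiff_comp_X_pow {d : ℕ} (hd : 0 < d) {β : ℂ} (hβ : β ≠ 0) (f g : ℚ[X]) :
    rootMultDiff (f.comp (X ^ d)) (g.comp (X ^ d)) β = rootMultDiff f g (β ^ d) := by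
  simp only [rootMultDiff, rootMult_comp_X_pow hd hβ]

lemma rootMultDiff_zero_comp_X_pow {d : ℕ} (hd : 0 < d) (f g : ℚ[X]) :
    rootMultDiff (f.comp (X ^ d)) (g.comp (X ^ d)) 0 = d * rootMultDiff f g 0 := by
  simp only [rootMultDiff, rootMult_zero_comp_X_pow hd]
  push_cast
  ring

structure IsGcdRecursion (d : ℕ) (A B : ℚ[X]) (p q g : ℕ → ℚ[X]) : Prop where
  d_pos : 0 < d
  A_ne_zero : A ≠ 0
  B_ne_zero : B ≠ 0
  isCoprime : IsCoprime A B
  p_zero_ne_zero : p 0 ≠ 0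
  q_zero_ne_zero : q 0 ≠ 0
  isCoprime_zero : IsCoprime (p 0) (q 0)
  gcd_eq : ∀ n, g n = EuclideanDomain.gcd (A * (p n).comp (X ^ d)) (B * (q n).comp (X ^ d))
  p_succ : ∀ n, p (n + 1) = A * (p n).comp (X ^ d) / g n
  q_succ : ∀ n, q (n + 1) = B * (q n).comp (X ^ d) / g n

namespace IsGcdRecursion

variable {d : ℕ} {A B : ℚ[X]} {p q g : ℕ → ℚ[X]}

lemma comp_X_pow_ne_zero (h : IsGcdRecursion d A B p q g) {f : ℚ[X]} (hf : f ≠ 0) :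
    f.comp (X ^ d) ≠ 0 :=
  (expand_ne_zero h.d_pos).2 hf

lemma ne_zero_and_isCoprime (h : IsGcdRecursion d A B p q g) (n : ℕ) :
    p n ≠ 0 ∧ q n ≠ 0 ∧ IsCoprime (p n) (q n) := by
  induction n with
  | zero => exact ⟨h.p_zero_ne_zero, h.q_zero_ne_zero, h.isCoprime_zero⟩
  | succ n ih =>
    have hF := mul_ne_zero h.A_ne_zero (h.comp_X_pow_ne_zero ih.1)
    have hG := mul_ne_zero h.B_ne_zero (h.comp_X_pow_ne_zero ih.2.1)
    rw [h.p_succ, h.q_succ, h.gcd_eq]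
    exact ⟨EuclideanDomain.left_div_gcd_ne_zero hF, EuclideanDomain.right_div_gcd_ne_zero hF hG,
      EuclideanDomain.isCoprime_div_gcd_div_gcd hF⟩

lemma gcd_mul_succ (h : IsGcdRecursion d A B p q g) (n : ℕ) :
    g n ≠ 0 ∧ g n * p (n + 1) = A * (p n).comp (X ^ d) ∧
      g n * q (n + 1) = B * (q n).comp (X ^ d) := by
  have hF := mul_ne_zero h.A_ne_zero (h.comp_X_pow_ne_zero (h.ne_zero_and_isCoprime n).1)
  have hg := EuclideanDomain.gcd_ne_zero_of_left (b := B * (q n).comp (X ^ d)) hF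
  rw [h.p_succ, h.q_succ, h.gcd_eq]
  exact ⟨hg, EuclideanDomain.mul_div_cancel' hg (EuclideanDomain.gcd_dvd_left _ _),
    EuclideanDomain.mul_div_cancel' hg (EuclideanDomain.gcd_dvd_right _ _)⟩

lemma rootMult_gcd_eq (h : IsGcdRecursion d A B p q g) (n : ℕ) (β : ℂ) :
    rootMult β (g n) = min (rootMult β A + rootMult β ((p n).comp (X ^ d)))
      (rootMult β B + rootMult β ((q n).comp (X ^ d))) := by
  obtain ⟨hp, hq, -⟩ := h.ne_zero_and_isCoprime n
  rw [h.gcd_eq, rootMult_gcd (mul_ne_zero h.A_ne_zero (h.comp_X_pow_ne_zero hp))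
    (mul_ne_zero h.B_ne_zero (h.comp_X_pow_ne_zero hq)), rootMult_mul h.A_ne_zero
    (h.comp_X_pow_ne_zero hp), rootMult_mul h.B_ne_zero (h.comp_X_pow_ne_zero hq)]

lemma rootMult_comp_eq_zero_or_eq_zero (h : IsGcdRecursion d A B p q g) (n : ℕ) (β : ℂ) :
    rootMult β ((p n).comp (X ^ d)) = 0 ∨ rootMult β ((q n).comp (X ^ d)) = 0 := by
  have hcop := (h.ne_zero_and_isCoprime n).2.2.map (compRingHom (X ^ d))
  rw [coe_compRingHom_apply, coe_compRingHom_apply] at hcop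
  exact rootMult_eq_zero_or_eq_zero_of_isCoprime hcop

lemma rootMultDiff_succ (h : IsGcdRecursion d A B p q g) (n : ℕ) (β : ℂ) :
    rootMultDiff (p (n + 1)) (q (n + 1)) β =
      rootMultDiff A B β + rootMultDiff ((p n).comp (X ^ d)) ((q n).comp (X ^ d)) β := by
  obtain ⟨hp, hq, -⟩ := h.ne_zero_and_isCoprime n
  obtain ⟨hp', hq', -⟩ := h.ne_zero_and_isCoprime (n + 1)
  obtain ⟨hg, hgp, hgq⟩ := h.gcd_mul_succ n
  have ep := congrArg (rootMult β) hgp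
  have eq' := congrArg (rootMult β) hgq
  rw [rootMult_mul hg hp', rootMult_mul h.A_ne_zero (h.comp_X_pow_ne_zero hp)] at ep
  rw [rootMult_mul hg hq', rootMult_mul h.B_ne_zero (h.comp_X_pow_ne_zero hq)] at eq'
  simp only [rootMultDiff]
  omega

lemma eventuallyShiftMonotone_rootMultDiff (h : IsGcdRecursion d A B p q g) (β : ℂ) :
    EventuallyShiftMonotone fun n => rootMultDiff (p n) (q n) β := by
  by_cases hβ : β = 0
  · subst hβ
    refine .of_monotone_or_antitone (monotone_or_antitone_of_eq_mul_add (a := d)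
      (c := rootMultDiff A B 0) (Nat.cast_nonneg d) fun n => ?_)
    rw [h.rootMultDiff_succ, rootMultDiff_zero_comp_X_pow h.d_pos, add_comm]
  · obtain ⟨K, P, hP, Δ, hKP⟩ := exists_add_period_eq_add (T := fun x : ℂ => x ^ d)
      (S := {x | x ≠ 0}) (c := rootMultDiff A B) (z := fun n => rootMultDiff (p n) (q n))
      (fun x hx => pow_ne_zero d hx)
      (fun n x hx => by rw [h.rootMultDiff_succ, rootMultDiff_comp_X_pow h.d_pos hx, add_comm])
      (finite_support_rootMultDiff A B) (finite_support_rootMultDiff _ _) hβ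
    exact .of_add_period_eq_add hP hKP

lemma rootMult_gcd_le (h : IsGcdRecursion d A B p q g) (n : ℕ) (β : ℂ) :
    rootMult β (g n) ≤ rootMult β A + rootMult β B := by
  have := h.rootMult_gcd_eq n β
  have := h.rootMult_comp_eq_zero_or_eq_zero n β
  omega

-- `rootMult β (g n) = min (a + P) (b + Q)` with `P = 0 ∨ Q = 0` depends only on `P - Q`
-- (which `rootMultDiff_succ` reads off `p (n + 1)` and `q (n + 1)`): monotonically if `a = 0`,
-- antitonically if `b = 0`.
lemma rootMult_gcd_le_of_rootMultDiff_le (h : IsGcdRecursion d A B p q g) (β : ℂ) {m n : ℕ}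
    (hmn : rootMultDiff (p (m + 1)) (q (m + 1)) β ≤ rootMultDiff (p (n + 1)) (q (n + 1)) β) :
    (rootMult β A = 0 → rootMult β (g m) ≤ rootMult β (g n)) ∧
      (rootMult β B = 0 → rootMult β (g n) ≤ rootMult β (g m)) := by
  rw [h.rootMultDiff_succ, h.rootMultDiff_succ] at hmn
  have := h.rootMult_gcd_eq m β
  have := h.rootMult_gcd_eq n β
  have := h.rootMult_comp_eq_zero_or_eq_zero m β
  have := h.rootMult_comp_eq_zero_or_eq_zero n β
  simp only [rootMultDiff] at hmn
  omega

lemma eventuallyPeriodic_rootMult_gcd (h : IsGcdRecursion d A B p q g) (β : ℂ) :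
    EventuallyPeriodic fun n => rootMult β (g n) := by
  refine (h.eventuallyShiftMonotone_rootMultDiff β).comp_succ.eventuallyPeriodic
    (h.rootMult_gcd_le · β) ?_
  exact (rootMult_eq_zero_or_eq_zero_of_isCoprime h.isCoprime).imp
    (fun hA m n hmn => (h.rootMult_gcd_le_of_rootMultDiff_le β hmn).1 hA)
    (fun hB m n hmn => (h.rootMult_gcd_le_of_rootMultDiff_le β hmn).2 hB)

end IsGcdRecursion

/-- **Proposition 2.** Let `d ≥ 2` and `A, B ∈ ℚ[X]` nonzero coprime. Let `p₀, q₀ ∈ ℚ[X]` be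
coprime nonzero polynomials, and recursively set
`g_n = gcd(A(X)·p_n(X^d), B(X)·q_n(X^d))`, `p_{n+1} = A(X)·p_n(X^d)/g_n`,
`q_{n+1} = B(X)·q_n(X^d)/g_n`. Then the sequence of degrees `(deg g_n)` is
eventually periodic. -/
theorem statement12
    (d : ℕ) (hd : 2 ≤ d)
    (A B : Polynomial ℚ) (hA : A ≠ 0) (hB : B ≠ 0) (hAB : IsCoprime A B)
    (p q g : ℕ → Polynomial ℚ)
    (hp0 : p 0 ≠ 0) (hq0 : q 0 ≠ 0) (hpq : IsCoprime (p 0) (q 0))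
    (hg : ∀ n, g n = EuclideanDomain.gcd (A * (p n).comp (Polynomial.X ^ d))
                       (B * (q n).comp (Polynomial.X ^ d)))
    (hp : ∀ n, p (n + 1) = A * (p n).comp (Polynomial.X ^ d) / g n)
    (hq : ∀ n, q (n + 1) = B * (q n).comp (Polynomial.X ^ d) / g n) :
    ∃ n₀ P : ℕ, 0 < P ∧ ∀ n ≥ n₀, (g (n + P)).natDegree = (g n).natDegree := by
  have h : IsGcdRecursion d A B p q g := ⟨by omega, hA, hB, hAB, hp0, hq0, hpq, hg, hp, hq⟩
  have hdeg (n : ℕ) :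
      (g n).natDegree = ∑ β ∈ ((A * B).aroots ℂ).toFinset, rootMult β (g n) :=
    natDegree_eq_sum_rootMult fun β hβ => by
      rw [Multiset.mem_toFinset, ← rootMult_ne_zero_iff, rootMult_mul hA hB]
      have := h.rootMult_gcd_le n β
      omega
  obtain ⟨n₀, P, hP, hper⟩ :=
    EventuallyPeriodic.finset_sum _ fun β _ => h.eventuallyPeriodic_rootMult_gcd β
  exact ⟨n₀, P, hP, fun n hn => by simpa only [hdeg] using hper n hn⟩
end

section
/- Let C, D ∈ ℤ[X] be nonzero polynomials such that no root of C and no root of D (in ℂ) is zero or a root of unity, and let d ≥ 2 be an integer. Then there exists m₀ ∈ ℕ such that for all m > m₀, gcd(C(X), D(X^{d^m})) is a constant (i.e. has degree 0). -/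
open Polynomial

/-- **Lemma 8.** Let `C, D ∈ ℤ[X]` be nonzero polynomials none of whose complex roots is zero or
a root of unity, and let `d ≥ 2`. Then there is `m₀ ∈ ℕ` such that for all `m > m₀` the gcd
(in `ℚ[X]`) of `C(X)` and `D(X^{d^m})` is a constant. -/
theorem statement13
    (C D : Polynomial ℤ) (hC : C ≠ 0) (hD : D ≠ 0)
    (d : ℕ) (hd : 2 ≤ d)
    (hCroots : ∀ z : ℂ, (Polynomial.aeval z) C = 0 → z ≠ 0 ∧ ∀ n : ℕ, 0 < n → z ^ n ≠ 1)
    (hDroots : ∀ z : ℂ, (Polynomial.aeval z) D = 0 → z ≠ 0 ∧ ∀ n : ℕ, 0 < n → z ^ n ≠ 1) :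
    ∃ m₀ : ℕ, ∀ m > m₀,
      (EuclideanDomain.gcd (C.map (Int.castRingHom ℚ))
        ((D.comp (Polynomial.X ^ d ^ m)).map (Int.castRingHom ℚ))).natDegree = 0 := by
  classical
  -- finitely many complex roots of C and D
  have hCmapC : C.map (Int.castRingHom ℂ) ≠ 0 :=
    (Polynomial.map_ne_zero_iff Int.cast_injective).mpr hC
  have hDmapC : D.map (Int.castRingHom ℂ) ≠ 0 :=
    (Polynomial.map_ne_zero_iff Int.cast_injective).mpr hD
  have hevalC : ∀ z : ℂ, (aeval z) C = eval z (C.map (Int.castRingHom ℂ)) := by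
    intro z
    rw [eval_map, aeval_def]
    congr 1
  have hevalD : ∀ z : ℂ, (aeval z) D = eval z (D.map (Int.castRingHom ℂ)) := by
    intro z
    rw [eval_map, aeval_def]
    congr 1
  have hCfin : {z : ℂ | (aeval z) C = 0}.Finite := by
    have := (Polynomial.finite_setOf_isRoot hCmapC)
    refine this.subset ?_
    intro z hz
    simpa [IsRoot, ← hevalC z] using hz
  have hDfin : {z : ℂ | (aeval z) D = 0}.Finite := by
    have := (Polynomial.finite_setOf_isRoot hDmapC)
    refine this.subset ?_
    intro z hz
    simpa [IsRoot, ← hevalD z] using hz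
  set S : Set ℕ := {m | (EuclideanDomain.gcd (C.map (Int.castRingHom ℚ))
      ((D.comp (Polynomial.X ^ d ^ m)).map (Int.castRingHom ℚ))).natDegree ≠ 0} with hS
  have hSfin : S.Finite := by
    have hsub : S ⊆ ⋃ z ∈ {x : ℂ | (aeval x) C = 0},
        {m : ℕ | (aeval (z ^ d ^ m)) D = 0} := by
      intro m hm
      -- the gcd has positive degree, hence a complex root
      set A := C.map (Int.castRingHom ℚ) with hA
      set B := (D.comp (Polynomial.X ^ d ^ m)).map (Int.castRingHom ℚ) with hB
      set G := EuclideanDomain.gcd A B with hG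
      have hAne : A ≠ 0 := (Polynomial.map_ne_zero_iff Int.cast_injective).mpr hC
      have hGne : G ≠ 0 := by
        intro h
        exact hAne ((EuclideanDomain.gcd_eq_zero_iff.mp h).1)
      have hGdeg : 0 < G.natDegree := Nat.pos_of_ne_zero hm
      have hGCdeg : 0 < (G.map (algebraMap ℚ ℂ)).degree := by
        rw [Polynomial.degree_map_eq_of_injective (algebraMap ℚ ℂ).injective]
        exact natDegree_pos_iff_degree_pos.mp hGdeg
      obtain ⟨z, hz⟩ := Complex.exists_root hGCdeg
      have hzA : (A.map (algebraMap ℚ ℂ)).IsRoot z :=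
        hz.dvd (Polynomial.map_dvd _ (EuclideanDomain.gcd_dvd_left A B))
      have hzB : (B.map (algebraMap ℚ ℂ)).IsRoot z :=
        hz.dvd (Polynomial.map_dvd _ (EuclideanDomain.gcd_dvd_right A B))
      have hcomp : ∀ p : Polynomial ℤ, (p.map (Int.castRingHom ℚ)).map (algebraMap ℚ ℂ)
          = p.map (Int.castRingHom ℂ) := by
        intro p
        rw [Polynomial.map_map]
        congr 1
      have hzC : (aeval z) C = 0 := by
        rw [hevalC z]
        have := hzA
        rwa [hA, hcomp] at this
      have hzD : (aeval (z ^ d ^ m)) D = 0 := by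
        have := hzB
        rw [hB, hcomp] at this
        have h2 : (aeval z) (D.comp (Polynomial.X ^ d ^ m)) = 0 := by
          rw [aeval_def, ← eval_map]
          exact this
        rwa [aeval_comp, map_pow, aeval_X] at h2
      exact Set.mem_biUnion hzC hzD
    refine Set.Finite.subset ?_ hsub
    refine Set.Finite.biUnion hCfin ?_
    intro z hz
    obtain ⟨hz0, hzu⟩ := hCroots z hz
    have hinj : Function.Injective (fun m : ℕ => z ^ d ^ m) := by
      intro a b hab
      by_contra hne
      rcases Ne.lt_or_gt hne with h | h
      all_goals {
        simp only at hab
        have hlt : d ^ (min a b) < d ^ (max a b) :=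
          Nat.pow_lt_pow_right (lt_of_lt_of_le one_lt_two hd) (by omega)
        have hpow : z ^ (d ^ max a b - d ^ min a b) = 1 := by
          have hz' : z ^ d ^ min a b ≠ 0 := pow_ne_zero _ hz0
          have : z ^ d ^ min a b * z ^ (d ^ max a b - d ^ min a b)
              = z ^ d ^ min a b * 1 := by
            rw [mul_one, ← pow_add]
            rw [Nat.add_sub_cancel' hlt.le]
            first
            | (rw [min_eq_left h.le, max_eq_right h.le]; exact hab.symm)
            | (rw [min_eq_right h.le, max_eq_left h.le]; exact hab)
          exact mul_left_cancel₀ hz' this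
        exact hzu _ (by omega) hpow
      }
    have : {m : ℕ | (aeval (z ^ d ^ m)) D = 0}
        = (fun m : ℕ => z ^ d ^ m) ⁻¹' {w : ℂ | (aeval w) D = 0} := rfl
    rw [this]
    exact Set.Finite.preimage hinj.injOn hDfin
  obtain ⟨m₀, hm₀⟩ := hSfin.bddAbove
  refine ⟨m₀, fun m hm => ?_⟩
  by_contra hne
  exact absurd (hm₀ hne) (not_le.mpr hm)
end

section
/- Let n, d be positive integers. Let r(d,n) be the largest divisor of d coprime to n, and set s(d,n) = d/r(d,n). Then the polynomial Φ_n(X^d) factors as the product of cyclotomic polynomials Φ_n(X^d) = ∏_{r ∣ r(d,n)} Φ_{r·n·s(d,n)}(X), the product ranging over all positive divisors r of r(d,n). -/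
/-!
Write `Φ_n(X^d) = expand d Φ_n` and expand in two stages, by `s` and then by `r`. Expanding
`Φ_m` by a prime `p ∣ m` gives `Φ_{mp}`, so the `s`-stage yields `Φ_{ns}`. Expanding by a prime
`p ∤ m` gives `Φ_{mp} Φ_m`, so expanding `Φ_m` by `r` coprime to `m` yields `∏_{t ∣ r} Φ_{tm}`:
first for prime powers, then for all `r` since the divisors of a coprime product factor.
-/

open Polynomial

theorem Nat.Coprime.prod_divisors_mul {M : Type*} [CommMonoid M] {m n : ℕ} (hmn : m.Coprime n)
    (f : ℕ → M) :
    ∏ t ∈ (m * n).divisors, f t = ∏ a ∈ m.divisors, ∏ b ∈ n.divisors, f (a * b) := by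
  rw [Nat.divisors_mul, Finset.mul_def, Finset.prod_image hmn.mul_injOn_divisors,
    Finset.prod_product]

namespace Polynomial

variable (R : Type*) [CommRing R]

theorem expand_cyclotomic_of_forall_prime_dvd {n s : ℕ} (hs : s ≠ 0)
    (h : ∀ p : ℕ, p.Prime → p ∣ s → p ∣ n) :
    expand R s (cyclotomic n R) = cyclotomic (n * s) R := by
  induction s using Nat.recOnMul generalizing n with
  | zero => exact absurd rfl hs
  | one => simp
  | prime p hp => exact cyclotomic_expand_eq_cyclotomic hp (h p hp dvd_rfl) R
  | mul a b iha ihb =>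
    obtain ⟨ha, hb⟩ := mul_ne_zero_iff.1 hs
    rw [expand_mul, ihb hb fun p hp hpb => h p hp (hpb.mul_left a),
      iha ha fun p hp hpa => (h p hp (hpa.mul_right b)).mul_right b, mul_comm a b, mul_assoc]

theorem expand_prime_pow_cyclotomic {p n : ℕ} (hp : p.Prime) (hpn : ¬ p ∣ n) (k : ℕ) :
    expand R (p ^ k) (cyclotomic n R) = ∏ i ∈ Finset.range (k + 1), cyclotomic (p ^ i * n) R := by
  induction k with
  | zero => simp
  | succ k ih =>
    have hpk : expand R (p ^ k) (cyclotomic (n * p) R) = cyclotomic (p ^ (k + 1) * n) R := by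
      have hq : ∀ q : ℕ, q.Prime → q ∣ p ^ k → q ∣ n * p := fun q hq hqp =>
        (Nat.prime_dvd_prime_iff_eq hq hp).1 (hq.dvd_of_dvd_pow hqp) ▸ dvd_mul_left q n
      rw [expand_cyclotomic_of_forall_prime_dvd R (pow_ne_zero k hp.ne_zero) hq]
      ring_nf
    rw [pow_succ, expand_mul, cyclotomic_expand_eq_cyclotomic_mul hp hpn, map_mul, hpk, ih,
      Finset.prod_range_succ _ (k + 1), mul_comm]

theorem expand_cyclotomic_of_coprime {r n : ℕ} (hr : r ≠ 0) (hrn : r.Coprime n) :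
    expand R r (cyclotomic n R) = ∏ t ∈ r.divisors, cyclotomic (t * n) R := by
  induction r using Nat.recOnPrimeCoprime generalizing n with
  | zero => exact absurd rfl hr
  | prime_pow p k hp =>
    rcases k.eq_zero_or_pos with rfl | hk
    · simp
    have hpn : ¬ p ∣ n := hp.coprime_iff_not_dvd.1 ((Nat.coprime_pow_left_iff hk p n).1 hrn)
    rw [expand_prime_pow_cyclotomic R hp hpn k, Nat.prod_divisors_prime_pow hp]
  | coprime a b _ _ hab iha ihb =>
    obtain ⟨ha, hb⟩ := mul_ne_zero_iff.1 hr
    rw [expand_mul, ihb hb (Nat.Coprime.coprime_mul_left hrn), map_prod, hab.prod_divisors_mul,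
      Finset.prod_comm]
    refine Finset.prod_congr rfl fun u hu => ?_
    rw [iha ha (Nat.Coprime.mul_right (hab.coprime_dvd_right (Nat.dvd_of_mem_divisors hu))
      (Nat.Coprime.coprime_mul_right hrn))]
    simp only [mul_assoc]

end Polynomial

theorem statement14_general
    (n d : ℕ) (hd : 0 < d)
    (r s : ℕ) (hrs : d = r * s)
    (hr : Nat.Coprime r n)
    (hs : ∀ p : ℕ, p.Prime → p ∣ s → p ∣ n) :
    (Polynomial.cyclotomic n ℤ).comp (Polynomial.X ^ d)
      = ∏ t ∈ Nat.divisors r, Polynomial.cyclotomic (t * n * s) ℤ := by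
  obtain ⟨hr0, hs0⟩ := mul_ne_zero_iff.1 (hrs ▸ hd.ne')
  have hrs_coprime : r.Coprime s :=
    Nat.coprime_of_dvd fun p hp hpr hps => hp.not_dvd_one (hr ▸ Nat.dvd_gcd hpr (hs p hp hps))
  rw [← expand_eq_comp_X_pow, hrs, expand_mul, expand_cyclotomic_of_forall_prime_dvd ℤ hs0 hs,
    expand_cyclotomic_of_coprime ℤ hr0 (hr.mul_right hrs_coprime)]
  simp only [mul_assoc]

/-- **Lemma 9.** Let `n, d` be positive integers, write `d = r·s` where `r = r(d,n)` is the
largest divisor of `d` coprime to `n` (so `r` is coprime to `n` and every prime factor of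
`s = s(d,n)` divides `n`). Then
`Φ_n(X^d) = ∏_{t ∣ r} Φ_{t·n·s}(X)`, the product ranging over the positive divisors `t` of `r`. -/
theorem statement14
    (n d : ℕ) (hn : 0 < n) (hd : 0 < d)
    (r s : ℕ) (hrs : d = r * s)
    (hr : Nat.Coprime r n)
    (hs : ∀ p : ℕ, p.Prime → p ∣ s → p ∣ n) :
    (Polynomial.cyclotomic n ℤ).comp (Polynomial.X ^ d)
      = ∏ t ∈ Nat.divisors r, Polynomial.cyclotomic (t * n * s) ℤ :=
  statement14_general n d hd r s hrs hr hs
end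

section
/- Let d ≥ 2 be an integer, r_a, r_b ∈ ℤ, and let (r_n)_{n≥0} be an eventually periodic sequence of integers. Let (u_n)_{n≥0} and (v_n)_{n≥0} be sequences of positive integers satisfying u_{n+1} = d·u_n + r_b − r_n and v_{n+1} = d·v_n − r_a + r_n for all n, and suppose u_n → ∞. Then limsup_{n→∞} v_n/u_n is a rational number. -/
/-!
Both `u` and `v` solve a recurrence `x (n + 1) = d * x n + e n` whose forcing term `e` is
periodic (after a shift by `n₀`). For such a recurrence the differences `x (n + P) - x n`
satisfy the homogeneous recurrence, so they equal `d ^ n * (x P - x 0)`; hence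
`x n - β * d ^ n` is periodic, thus bounded, for `β = (x P - x 0) / (d ^ P - 1)`, and
`x n / d ^ n → β`. Therefore `v n / u n` converges to the rational number
`(v P - v 0) / (u P - u 0)`, and the limsup is this limit. The denominator is nonzero because
otherwise `u` would be periodic, contradicting `u n → ∞`.
-/

open Filter Topology Function

theorem Function.Periodic.finite_range_nat {α : Type*} {g : ℕ → α} {P : ℕ} (hg : Periodic g P)
    (hP : 0 < P) : (Set.range g).Finite := by
  refine ((Set.finite_Iio P).image g).subset ?_
  rintro _ ⟨n, rfl⟩
  exact ⟨n % P, Nat.mod_lt n hP, hg.map_mod_nat n⟩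

theorem add_period_sub_eq_pow_mul {R : Type*} [CommRing R] {P : ℕ} {d : R} {e x : ℕ → R}
    (he : Periodic e P) (hx : ∀ n, x (n + 1) = d * x n + e n) (n : ℕ) :
    x (n + P) - x n = d ^ n * (x P - x 0) := by
  induction n with
  | zero => simp
  | succ n ih =>
    have hxP : x (n + 1 + P) = d * x (n + P) + e n := by
      rw [add_right_comm, hx, he]
    rw [hxP, hx, pow_succ]
    linear_combination d * ih

theorem periodic_of_eq_of_affine_rec {R : Type*} [CommRing R] {P : ℕ} {d : R} {e x : ℕ → R}
    (he : Periodic e P) (hx : ∀ n, x (n + 1) = d * x n + e n)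
    (h : x P = x 0) : Periodic x P := fun n => by
  simpa [h, sub_eq_zero] using add_period_sub_eq_pow_mul he hx n

section PeriodicForcing

variable {P : ℕ} {d : ℝ} {e x : ℕ → ℝ}

theorem tendsto_div_pow_of_affine_rec (hd : 1 < d) (hP : 0 < P) (he : Periodic e P)
    (hx : ∀ n, x (n + 1) = d * x n + e n) :
    Tendsto (fun n => x n / d ^ n) atTop (𝓝 ((x P - x 0) / (d ^ P - 1))) := by
  set β := (x P - x 0) / (d ^ P - 1)
  have hdP : d ^ P - 1 ≠ 0 := (sub_pos.2 (one_lt_pow₀ hd hP.ne')).ne'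
  have hdn (n : ℕ) : d ^ n ≠ 0 := pow_ne_zero n (by linarith)
  have hper : Periodic (fun n => x n - β * d ^ n) P := fun n => by
    have := add_period_sub_eq_pow_mul he hx n
    simp only [β, pow_add]
    field_simp
    linear_combination (d ^ P - 1) * this
  have hbdd : IsBoundedUnder (· ≤ ·) atTop ((‖·‖) ∘ fun n => x n - β * d ^ n) :=
    ((hper.comp _).finite_range_nat hP).bddAbove.isBoundedUnder_of_range
  have hpow : Tendsto (fun n => (d⁻¹) ^ n) atTop (𝓝 0) :=
    tendsto_pow_atTop_nhds_zero_of_lt_one (by positivity) (inv_lt_one_of_one_lt₀ hd)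
  have hlim := (hpow.zero_mul_isBoundedUnder_le hbdd).const_add β
  rw [add_zero] at hlim
  refine hlim.congr fun n => ?_
  rw [inv_pow]
  field_simp
  ring

theorem apply_period_ne_apply_zero_of_tendsto_atTop (hP : 0 < P) (he : Periodic e P)
    (hx : ∀ n, x (n + 1) = d * x n + e n) (hxtop : Tendsto x atTop atTop) : x P ≠ x 0 := by
  intro h
  have hconst : ∀ m : ℕ, x (m * P) = x 0 := (periodic_of_eq_of_affine_rec he hx h).nat_mul_eq
  have hsub : Tendsto (fun m : ℕ => x (m * P)) atTop atTop :=
    hxtop.comp (tendsto_id.atTop_mul_const' hP)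
  simp only [hconst] at hsub
  exact not_tendsto_const_atTop _ _ hsub

theorem tendsto_div_of_affine_rec (hd : 1 < d) (hP : 0 < P) {f y : ℕ → ℝ}
    (he : Periodic e P) (hf : Periodic f P) (hx : ∀ n, x (n + 1) = d * x n + e n)
    (hy : ∀ n, y (n + 1) = d * y n + f n) (hxtop : Tendsto x atTop atTop) :
    Tendsto (fun n => y n / x n) atTop (𝓝 ((y P - y 0) / (x P - x 0))) := by
  have hx0 : x P - x 0 ≠ 0 :=
    sub_ne_zero.2 (apply_period_ne_apply_zero_of_tendsto_atTop hP he hx hxtop)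
  have hdP : d ^ P - 1 ≠ 0 := (sub_pos.2 (one_lt_pow₀ hd hP.ne')).ne'
  have hlim := (tendsto_div_pow_of_affine_rec hd hP hf hy).div
    (tendsto_div_pow_of_affine_rec hd hP he hx) (div_ne_zero hx0 hdP)
  rw [div_div_div_cancel_right₀ hdP] at hlim
  refine hlim.congr fun n => ?_
  exact div_div_div_cancel_right₀ (pow_ne_zero n (by linarith)) _ _

end PeriodicForcing

theorem statement18_general
    (d : ℕ) (hd : 2 ≤ d) (ra rb : ℤ)
    (r : ℕ → ℤ)
    (hper : ∃ n₀ P : ℕ, 0 < P ∧ ∀ n ≥ n₀, r (n + P) = r n)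
    (u v : ℕ → ℕ)
    (hurec : ∀ n, (u (n + 1) : ℤ) = d * u n + rb - r n)
    (hvrec : ∀ n, (v (n + 1) : ℤ) = d * v n - ra + r n)
    (hutop : Filter.Tendsto (fun n => (u n : ℝ)) Filter.atTop Filter.atTop) :
    ∃ L : ℚ, Filter.limsup (fun n => (v n : ℝ) / (u n : ℝ)) Filter.atTop = (L : ℝ) := by
  obtain ⟨n₀, P, hP, hr⟩ := hper
  have hrP : Periodic (fun n => (r (n + n₀) : ℝ)) P := fun n => by
    simp only [add_right_comm n P n₀, hr (n + n₀) (Nat.le_add_left n₀ n)]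
  have hd' : (1 : ℝ) < d := by exact_mod_cast hd
  have hu (n : ℕ) : (u (n + 1 + n₀) : ℝ) = d * u (n + n₀) + (rb - r (n + n₀)) := by
    rw [add_right_comm]
    exact_mod_cast (hurec (n + n₀)).trans (add_sub_assoc _ _ _)
  have hv (n : ℕ) : (v (n + 1 + n₀) : ℝ) = d * v (n + n₀) + (r (n + n₀) - ra) := by
    rw [add_right_comm]
    exact_mod_cast (hvrec (n + n₀)).trans (by push_cast; ring)
  have hlim := tendsto_div_of_affine_rec (x := fun n => (u (n + n₀) : ℝ))
    (y := fun n => (v (n + n₀) : ℝ)) hd' hP (hrP.comp fun t => rb - t)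
    (hrP.comp fun t => t - ra) hu hv ((tendsto_add_atTop_iff_nat n₀).2 hutop)
  refine ⟨((v (P + n₀) : ℚ) - v n₀) / ((u (P + n₀) : ℚ) - u n₀), ?_⟩
  rw [((tendsto_add_atTop_iff_nat n₀).1 hlim).limsup_eq]
  simp

/-- The step deducing Theorem 2 from Proposition 2: let `d ≥ 2`, `r_a, r_b ∈ ℤ` and let `(r_n)`
be an eventually periodic sequence of integers. If `(u_n)`, `(v_n)` are sequences of positive
integers with `u_{n+1} = d·u_n + r_b - r_n`, `v_{n+1} = d·v_n - r_a + r_n` and `u_n → ∞`, then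
`limsup_n v_n/u_n` is a rational number. -/
theorem statement18
    (d : ℕ) (hd : 2 ≤ d) (ra rb : ℤ)
    (r : ℕ → ℤ)
    (hper : ∃ n₀ P : ℕ, 0 < P ∧ ∀ n ≥ n₀, r (n + P) = r n)
    (u v : ℕ → ℕ) (hu : ∀ n, 0 < u n) (hv : ∀ n, 0 < v n)
    (hurec : ∀ n, (u (n + 1) : ℤ) = d * u n + rb - r n)
    (hvrec : ∀ n, (v (n + 1) : ℤ) = d * v n - ra + r n)
    (hutop : Filter.Tendsto (fun n => (u n : ℝ)) Filter.atTop Filter.atTop) :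
    ∃ L : ℚ, Filter.limsup (fun n => (v n : ℝ) / (u n : ℝ)) Filter.atTop = (L : ℝ) :=
  statement18_general d hd ra rb r hper u v hurec hvrec hutop
end

section
/- Let d ≥ 2 be an integer, r_a, r_b ∈ ℤ, and let (r_n)_{n≥0} be a sequence of integers which is periodic with period P ≥ 1 from index n₀ (i.e. r_{n+P} = r_n for all n ≥ n₀). Let (u_n), (v_n) be sequences of positive integers satisfying u_{n+1} = d·u_n + r_b − r_n and v_{n+1} = d·v_n − r_a + r_n for all n. Set R = ∑_{j=0}^{P−1} d^{P−1−j}·r_{n₀+j}, r_u = r_b·(1 + d + ⋯ + d^{P−1}) − R, and r_v = r_a·(1 + d + ⋯ + d^{P−1}) − R. If v_{n₀} − r_v/(d^P − 1) ≠ 0, then lim_{k→∞} u_{n₀+kP}/v_{n₀+kP} = (u_{n₀} + r_u/(d^P − 1))/(v_{n₀} − r_v/(d^P − 1)); in particular this limit is a rational number. -/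
/-!
Over one period the recurrences become affine with constant coefficients:
`u_{n₀+(k+1)P} = d^P u_{n₀+kP} + r_u` and `v_{n₀+(k+1)P} = d^P v_{n₀+kP} - r_v`.
Hence `u_{n₀+kP} = d^{kP} A - r_u/(d^P - 1)` and `v_{n₀+kP} = d^{kP} B + r_v/(d^P - 1)`, with `A`
and `B` the numerator and denominator of the claimed limit; the geometric factor `d^{kP}`
dominates and cancels in the quotient.
-/

open Filter Finset Topology

theorem add_mul_eq_of_periodic_from {α : Type*} {c : ℕ → α} {n₀ P : ℕ}
    (hper : ∀ n ≥ n₀, c (n + P) = c n) {n : ℕ} (hn : n₀ ≤ n) (k : ℕ) :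
    c (n + k * P) = c n := by
  induction k with
  | zero => simp
  | succ k ih =>
    rw [add_mul, one_mul, ← add_assoc, hper _ (by omega), ih]

theorem add_eq_pow_mul_add_sum_of_rec {R : Type*} [CommSemiring R] {a : R} {x c : ℕ → R}
    (h : ∀ n, x (n + 1) = a * x n + c n) (m t : ℕ) :
    x (m + t) = a ^ t * x m + ∑ j ∈ range t, a ^ (t - 1 - j) * c (m + j) := by
  induction t with
  | zero => simp
  | succ t ih =>
    have hpow : ∀ j ∈ range t,
        a ^ (t + 1 - 1 - j) * c (m + j) = a * (a ^ (t - 1 - j) * c (m + j)) := fun j hj => by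
      rw [show t + 1 - 1 - j = t - 1 - j + 1 by have := mem_range.1 hj; omega, pow_succ]
      ring
    rw [← add_assoc, h, ih, sum_range_succ, sum_congr rfl hpow, ← mul_sum, Nat.add_sub_cancel,
      Nat.sub_self, pow_zero, one_mul, pow_succ]
    ring

theorem add_period_eq_of_rec {R : Type*} [CommSemiring R] {a : R} {x c : ℕ → R}
    (h : ∀ n, x (n + 1) = a * x n + c n) {n₀ P : ℕ} (hper : ∀ n ≥ n₀, c (n + P) = c n) (k : ℕ) :
    x (n₀ + (k + 1) * P) =
      a ^ P * x (n₀ + k * P) + ∑ j ∈ range P, a ^ (P - 1 - j) * c (n₀ + j) := by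
  rw [add_one_mul, ← add_assoc, add_eq_pow_mul_add_sum_of_rec h]
  congr 2 with j
  rw [add_right_comm, add_mul_eq_of_periodic_from hper (Nat.le_add_right n₀ j)]

theorem sum_pow_mul_sub_eq {R : Type*} [CommRing R] (a b : R) (c : ℕ → R) (P : ℕ) :
    ∑ j ∈ range P, a ^ (P - 1 - j) * (b - c j) =
      b * ∑ j ∈ range P, a ^ j - ∑ j ∈ range P, a ^ (P - 1 - j) * c j := by
  rw [← sum_range_reflect (fun j => a ^ j), mul_sum, ← sum_sub_distrib]
  exact sum_congr rfl fun j _ => by ring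

theorem eq_pow_mul_sub_of_rec {K : Type*} [Field K] {q s : K} (hq : q ≠ 1) {y : ℕ → K}
    (h : ∀ k, y (k + 1) = q * y k + s) (k : ℕ) :
    y k = q ^ k * (y 0 + s / (q - 1)) - s / (q - 1) := by
  have hq' : q - 1 ≠ 0 := sub_ne_zero.2 hq
  induction k with
  | zero => simp
  | succ k ih =>
    rw [h, ih, pow_succ]
    field_simp
    ring

theorem tendsto_pow_mul_add_div_pow_mul_add {q : ℝ} (hq : 1 < q) (A a B b : ℝ) (hB : B ≠ 0) :
    Tendsto (fun k : ℕ => (q ^ k * A + a) / (q ^ k * B + b)) atTop (𝓝 (A / B)) := by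
  have hq0 : q ≠ 0 := by positivity
  have hdecay : Tendsto (fun k : ℕ => q⁻¹ ^ k) atTop (𝓝 0) :=
    tendsto_pow_atTop_nhds_zero_of_lt_one (by positivity) (inv_lt_one_of_one_lt₀ hq)
  have hlim : Tendsto (fun k : ℕ => (A + a * q⁻¹ ^ k) / (B + b * q⁻¹ ^ k)) atTop (𝓝 (A / B)) := by
    have h := (tendsto_const_nhds (x := A)).add (hdecay.const_mul a) |>.div
      ((tendsto_const_nhds (x := B)).add (hdecay.const_mul b)) (by simpa using hB)
    rwa [mul_zero, add_zero, mul_zero, add_zero] at h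
  refine hlim.congr fun k => ?_
  have hk : q ^ k * q⁻¹ ^ k = 1 := by rw [← mul_pow, mul_inv_cancel₀ hq0, one_pow]
  rw [← mul_div_mul_left _ _ (pow_ne_zero k hq0)]
  congr 1
  · linear_combination a * hk
  · linear_combination b * hk

theorem tendsto_div_of_affine_rec_s19 {q s t : ℝ} (hq : 1 < q) {y z : ℕ → ℝ}
    (hy : ∀ k, y (k + 1) = q * y k + s) (hz : ∀ k, z (k + 1) = q * z k + t)
    (hne : z 0 + t / (q - 1) ≠ 0) :
    Tendsto (fun k => y k / z k) atTop (𝓝 ((y 0 + s / (q - 1)) / (z 0 + t / (q - 1)))) := by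
  refine (tendsto_pow_mul_add_div_pow_mul_add hq _ (-(s / (q - 1))) _ (-(t / (q - 1))) hne).congr
    fun k => ?_
  rw [eq_pow_mul_sub_of_rec hq.ne' hy k, eq_pow_mul_sub_of_rec hq.ne' hz k]
  simp only [sub_eq_add_neg]

theorem statement19_general
    (d : ℕ) (hd : 2 ≤ d) (ra rb : ℤ)
    (n₀ P : ℕ) (hP : 0 < P)
    (r : ℕ → ℤ) (hper : ∀ n ≥ n₀, r (n + P) = r n)
    (u v : ℕ → ℕ)
    (hurec : ∀ n, (u (n + 1) : ℤ) = d * u n + rb - r n)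
    (hvrec : ∀ n, (v (n + 1) : ℤ) = d * v n - ra + r n)
    (R : ℤ) (hR : R = ∑ j ∈ Finset.range P, (d : ℤ) ^ (P - 1 - j) * r (n₀ + j))
    (ru rv : ℝ)
    (hru : ru = (rb : ℝ) * (∑ j ∈ Finset.range P, (d : ℝ) ^ j) - (R : ℝ))
    (hrv : rv = (ra : ℝ) * (∑ j ∈ Finset.range P, (d : ℝ) ^ j) - (R : ℝ))
    (hne : (v n₀ : ℝ) - rv / ((d : ℝ) ^ P - 1) ≠ 0) :
    Filter.Tendsto (fun k => (u (n₀ + k * P) : ℝ) / (v (n₀ + k * P) : ℝ)) Filter.atTop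
      (nhds (((u n₀ : ℝ) + ru / ((d : ℝ) ^ P - 1)) / ((v n₀ : ℝ) - rv / ((d : ℝ) ^ P - 1))))
    ∧ ∃ L : ℚ,
        ((u n₀ : ℝ) + ru / ((d : ℝ) ^ P - 1)) / ((v n₀ : ℝ) - rv / ((d : ℝ) ^ P - 1))
          = (L : ℝ) := by
  have hq : 1 < (d : ℝ) ^ P := one_lt_pow₀ (by exact_mod_cast hd) hP.ne'
  have hurec' : ∀ n, (u (n + 1) : ℝ) = d * u n + (rb - r n) := fun n => by
    have h : (u (n + 1) : ℝ) = d * u n + rb - r n := by exact_mod_cast hurec n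
    linarith
  have hvrec' : ∀ n, (v (n + 1) : ℝ) = d * v n + -(ra - r n) := fun n => by
    have h : (v (n + 1) : ℝ) = d * v n - ra + r n := by exact_mod_cast hvrec n
    linarith
  have hRsum : (R : ℝ) = ∑ j ∈ range P, (d : ℝ) ^ (P - 1 - j) * r (n₀ + j) := by
    rw [hR]; push_cast; rfl
  have hu_period : ∀ k, (u (n₀ + (k + 1) * P) : ℝ) = d ^ P * u (n₀ + k * P) + ru := fun k => by
    rw [add_period_eq_of_rec (x := fun n => (u n : ℝ)) hurec' (fun n hn => by rw [hper n hn]) k,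
      sum_pow_mul_sub_eq, hru, hRsum]
  have hv_period : ∀ k, (v (n₀ + (k + 1) * P) : ℝ) = d ^ P * v (n₀ + k * P) + -rv := fun k => by
    rw [add_period_eq_of_rec (x := fun n => (v n : ℝ)) hvrec' (fun n hn => by rw [hper n hn]) k]
    simp only [mul_neg, sum_neg_distrib]
    rw [sum_pow_mul_sub_eq, hrv, hRsum]
  have hlim := tendsto_div_of_affine_rec_s19 hq (y := fun k => u (n₀ + k * P))
    (z := fun k => v (n₀ + k * P)) hu_period hv_period
    (by simpa [neg_div, ← sub_eq_add_neg] using hne)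
  refine ⟨by simpa [neg_div, ← sub_eq_add_neg] using hlim, ?_⟩
  refine ⟨(u n₀ + (rb * ∑ j ∈ range P, (d : ℚ) ^ j - R) / (d ^ P - 1)) /
    (v n₀ - (ra * ∑ j ∈ range P, (d : ℚ) ^ j - R) / (d ^ P - 1)), ?_⟩
  rw [hru, hrv]
  push_cast
  rfl

/-- Let `d ≥ 2`, `r_a, r_b ∈ ℤ`, and let `(r_n)` be a sequence of integers which is periodic with
period `P ≥ 1` from index `n₀`. Let `(u_n)`, `(v_n)` be sequences of positive integers with
`u_{n+1} = d·u_n + r_b - r_n` and `v_{n+1} = d·v_n - r_a + r_n`. With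
`R = ∑_{j<P} d^{P-1-j}·r_{n₀+j}`, `r_u = r_b·(1 + d + ⋯ + d^{P-1}) - R` and
`r_v = r_a·(1 + d + ⋯ + d^{P-1}) - R`, if `v_{n₀} - r_v/(d^P - 1) ≠ 0` then
`lim_{k→∞} u_{n₀+kP}/v_{n₀+kP} = (u_{n₀} + r_u/(d^P - 1))/(v_{n₀} - r_v/(d^P - 1))`,
a rational number. -/
theorem statement19
    (d : ℕ) (hd : 2 ≤ d) (ra rb : ℤ)
    (n₀ P : ℕ) (hP : 0 < P)
    (r : ℕ → ℤ) (hper : ∀ n ≥ n₀, r (n + P) = r n)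
    (u v : ℕ → ℕ) (hu : ∀ n, 0 < u n) (hv : ∀ n, 0 < v n)
    (hurec : ∀ n, (u (n + 1) : ℤ) = d * u n + rb - r n)
    (hvrec : ∀ n, (v (n + 1) : ℤ) = d * v n - ra + r n)
    (R : ℤ) (hR : R = ∑ j ∈ Finset.range P, (d : ℤ) ^ (P - 1 - j) * r (n₀ + j))
    (ru rv : ℝ)
    (hru : ru = (rb : ℝ) * (∑ j ∈ Finset.range P, (d : ℝ) ^ j) - (R : ℝ))
    (hrv : rv = (ra : ℝ) * (∑ j ∈ Finset.range P, (d : ℝ) ^ j) - (R : ℝ))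
    (hne : (v n₀ : ℝ) - rv / ((d : ℝ) ^ P - 1) ≠ 0) :
    Filter.Tendsto (fun k => (u (n₀ + k * P) : ℝ) / (v (n₀ + k * P) : ℝ)) Filter.atTop
      (nhds (((u n₀ : ℝ) + ru / ((d : ℝ) ^ P - 1)) / ((v n₀ : ℝ) - rv / ((d : ℝ) ^ P - 1))))
    ∧ ∃ L : ℚ,
        ((u n₀ : ℝ) + ru / ((d : ℝ) ^ P - 1)) / ((v n₀ : ℝ) - rv / ((d : ℝ) ^ P - 1))
          = (L : ℝ) :=
  statement19_general d hd ra rb n₀ P hP r hper u v hurec hvrec R hR ru rv hru hrv hne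
end
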